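/- arXiv:2511.02585 — 5 statements merged into one kernel-verified Lean document; each statement's English description precedes it below -/
import Mathlib

section
/- For every integer q with 1 ≤ q ≤ m, the Knutson–Tao classes ξ⁺_q and ξ⁻_q belong to H_m; that is, for every pair s, t ∈ V_m with |s| > |t| and |s| − |t| odd, the polynomial w(s) − w(t) divides both ξ⁺_q(s) − ξ⁺_q(t) and ξ⁻_q(s) − ξ⁻_q(t) in ℚ[α,δ]. (In particular, together with the constant class ξ⁰, all Knutson–Tao classes define elements of the GKM ring H_m.) -/
noncomputable section

open Finset MvPolynomial

/-- The coefficient ring `R = ℚ[α,δ]`, realized as polynomials in two variables. -/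
abbrev Rpoly : Type := MvPolynomial (Fin 2) ℚ

/-- The variable `α`. -/
def va : Rpoly := X 0

/-- The variable `δ`. -/
def vd : Rpoly := X 1

/-- `P⁻(a,b) = ∏_{k=a}^{b} (−α + k·δ)`. -/
def Pneg (a b : ℤ) : Rpoly :=
  ∏ k ∈ Finset.Icc a b, (-va + MvPolynomial.C (k : ℚ) * vd)

/-- `P⁺(a,b) = ∏_{k=a}^{b} (α + k·δ)`. -/
def Ppos (a b : ℤ) : Rpoly :=
  ∏ k ∈ Finset.Icc a b, (va + MvPolynomial.C (k : ℚ) * vd)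

/-- Binomial coefficient `C(n,q)` (all uses have `n ≥ 0`). -/
def B (n : ℤ) (q : ℕ) : ℚ := (n.toNat).choose q

/-- The Knutson–Tao class `ξ⁺_q = ξ(m+q, m−q)`, as a function on vertices `t`
(the vertex `t` encodes the pair `(m+t, m−t)`). -/
def xiP (m : ℤ) (q : ℕ) (t : ℤ) : Rpoly :=
  if (q : ℤ) ≤ t ∧ t ≤ m then
    MvPolynomial.C (B (⌈((t : ℚ) - (q : ℚ) + 1) / 2⌉ + q - 1) q) *
      Pneg (⌈((t : ℚ) - (q : ℚ) + 1) / 2⌉ - 1) (⌈((t : ℚ) - (q : ℚ) + 1) / 2⌉ + q - 2)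
  else if -m ≤ t ∧ t ≤ -((q : ℤ) + 1) then
    MvPolynomial.C (B (⌈(-(t : ℚ) - (q : ℚ)) / 2⌉ + q - 1) q) *
      Ppos (⌈(-(t : ℚ) - (q : ℚ)) / 2⌉ + 1) (⌈(-(t : ℚ) - (q : ℚ)) / 2⌉ + q)
  else 0

/-- The Knutson–Tao class `ξ⁻_q = ξ(m−q, m+q)`. -/
def xiM (m : ℤ) (q : ℕ) (t : ℤ) : Rpoly :=
  if (q : ℤ) + 1 ≤ t ∧ t ≤ m then
    MvPolynomial.C (B (⌈((t : ℚ) - (q : ℚ)) / 2⌉ + q - 1) q) *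
      Pneg (⌈((t : ℚ) - (q : ℚ)) / 2⌉) (⌈((t : ℚ) - (q : ℚ)) / 2⌉ + q - 1)
  else if -m ≤ t ∧ t ≤ -(q : ℤ) then
    MvPolynomial.C (B (⌈(-(t : ℚ) - (q : ℚ) + 1) / 2⌉ + q - 1) q) *
      Ppos (⌈(-(t : ℚ) - (q : ℚ) + 1) / 2⌉) (⌈(-(t : ℚ) - (q : ℚ) + 1) / 2⌉ + q - 1)
  else 0

/-- The weight of the vertex `t`: `w(t) = ((1−2t)/2)·α + (t(t−1)/2)·δ`. -/
def w (t : ℤ) : Rpoly :=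
  MvPolynomial.C ((1 - 2 * (t : ℚ)) / 2) * va +
    MvPolynomial.C (((t : ℚ) * ((t : ℚ) - 1)) / 2) * vd

/-!
Since `|s| - |t|` is odd, `s + t = 2k + 1` for an integer `k`, and `w s - w t` is a nonzero
rational multiple of `-α + kδ`. Modulo `-α + kδ` each factor `∓α + jδ` becomes `(j ∓ k)δ`, so
`ξ^±_q(t)` becomes `(x)_q (y)_q / q! · δ^q` for rising factorials `(x)_q` at integers `x, y`
given by one formula in `t` on all of `V_m`: in the middle range `(x)_q` vanishes, and on the
negative side the reflection `(1 - q - x)_q = (-1)^q (x)_q` brings the values to the same shape.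
Replacing `t` by `2k + 1 - t` sends `(x, y)` to `(1 - q - y, 1 - q - x)`, which leaves that
product unchanged.
-/

theorem ascPochhammer_eval_eq_prod_range {R : Type*} [CommSemiring R] (n : ℕ) (r : R) :
    (ascPochhammer R n).eval r = ∏ j ∈ range n, (r + j) := by
  induction n with
  | zero => simp
  | succ n ih => rw [ascPochhammer_succ_eval, ih, prod_range_succ]

theorem ascPochhammer_eval_one_sub_sub {R : Type*} [CommRing R] (n : ℕ) (r : R) :
    (ascPochhammer R n).eval (1 - n - r) = (-1) ^ n * (ascPochhammer R n).eval r := by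
  rw [show 1 - (n : R) - r = -(r + n - 1) by ring, ascPochhammer_eval_neg_eq_descPochhammer,
    descPochhammer_eval_eq_ascPochhammer, show r + n - 1 - n + 1 = r by ring]

theorem ascPochhammer_eval_intCast_eq_zero {R : Type*} [Ring R] {n : ℕ} {x : ℤ}
    (h₁ : 1 - (n : ℤ) ≤ x) (h₂ : x ≤ 0) : (ascPochhammer R n).eval (x : R) = 0 := by
  obtain ⟨k, rfl⟩ : ∃ k : ℕ, x = -k := ⟨(-x).toNat, by omega⟩
  push_cast
  exact ascPochhammer_eval_neg_coe_nat_of_lt (by omega)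

theorem prod_Icc_intCast_add_eq_ascPochhammer {R : Type*} [CommRing R] (q : ℕ) {a b : ℤ}
    (hb : b = a + q - 1) (c : R) :
    ∏ j ∈ Icc a b, ((j : R) + c) = (ascPochhammer R q).eval (a + c) := by
  subst hb
  rw [Int.Icc_eq_finset_map, prod_map, show (a + q - 1 + 1 - a).toNat = q by omega,
    ascPochhammer_eval_eq_prod_range]
  refine prod_congr rfl fun i _ => ?_
  simp only [Function.Embedding.trans_apply, Nat.castEmbedding_apply, addLeftEmbedding_apply]
  push_cast
  ring

theorem B_eq_ascPochhammer_div_factorial (q : ℕ) {a : ℤ} (ha : 1 ≤ a) :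
    B (a + q - 1) q = (ascPochhammer ℚ q).eval (a : ℚ) / q.factorial := by
  obtain ⟨n, rfl⟩ : ∃ n : ℕ, a = n + 1 := ⟨(a - 1).toNat, by omega⟩
  rw [B, show ((n : ℤ) + 1 + q - 1).toNat = n + q by omega, eq_div_iff (by positivity),
    show ((n + 1 : ℤ) : ℚ) = ((n + 1 : ℕ) : ℚ) by push_cast; ring,
    ascPochhammer_nat_eq_natCast_ascFactorial, Nat.ascFactorial_eq_factorial_mul_choose]
  push_cast
  ring

theorem two_mul_ceil_half_bounds (n : ℤ) : n ≤ 2 * ⌈(n : ℚ) / 2⌉ ∧ 2 * ⌈(n : ℚ) / 2⌉ ≤ n + 1 := by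
  have h₁ := Int.le_ceil ((n : ℚ) / 2)
  have h₂ := Int.ceil_lt_add_one ((n : ℚ) / 2)
  have hlt : 2 * ⌈(n : ℚ) / 2⌉ < n + 2 := by
    exact_mod_cast (by linarith : (2 * ⌈(n : ℚ) / 2⌉ : ℚ) < n + 2)
  exact ⟨by exact_mod_cast (by linarith : (n : ℚ) ≤ 2 * ⌈(n : ℚ) / 2⌉), by omega⟩

def pochPair (q : ℕ) (x y : ℤ) : ℚ :=
  (ascPochhammer ℚ q).eval (x : ℚ) * (ascPochhammer ℚ q).eval (y : ℚ) / q.factorial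

theorem pochPair_comm (q : ℕ) (x y : ℤ) : pochPair q x y = pochPair q y x := by
  rw [pochPair, pochPair, mul_comm ((ascPochhammer ℚ q).eval (x : ℚ))]

theorem pochPair_reflect (q : ℕ) {x y x' y' : ℤ} (hx : x + x' = 1 - q) (hy : y + y' = 1 - q) :
    pochPair q x y = pochPair q x' y' := by
  rw [pochPair, pochPair, show x' = 1 - q - x by omega, show y' = 1 - q - y by omega]
  push_cast
  rw [ascPochhammer_eval_one_sub_sub, ascPochhammer_eval_one_sub_sub,
    mul_mul_mul_comm, ← mul_pow, neg_one_mul, neg_neg, one_pow, one_mul]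

theorem pochPair_eq_zero {q : ℕ} {x : ℤ} (h₁ : 1 - (q : ℤ) ≤ x) (h₂ : x ≤ 0) (y : ℤ) :
    pochPair q x y = 0 := by
  rw [pochPair, ascPochhammer_eval_intCast_eq_zero h₁ h₂, zero_mul, zero_div]

def edgeForm (k : ℤ) : Rpoly := -va + C (k : ℚ) * vd

theorem w_sub_w_of_add_eq {s t k : ℤ} (h : s + t = 2 * k + 1) :
    w s - w t = C ((s : ℚ) - t) * edgeForm k := by
  have h' : (s : ℚ) + t = 2 * k + 1 := by exact_mod_cast h
  have hα : (1 - 2 * (s : ℚ)) / 2 - (1 - 2 * (t : ℚ)) / 2 = -((s : ℚ) - t) := by ring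
  have hδ : (s : ℚ) * (s - 1) / 2 - t * (t - 1) / 2 = ((s : ℚ) - t) * k := by
    linear_combination ((s : ℚ) - t) / 2 * h'
  calc w s - w t
      = C ((1 - 2 * (s : ℚ)) / 2 - (1 - 2 * (t : ℚ)) / 2) * va
          + C ((s : ℚ) * (s - 1) / 2 - t * (t - 1) / 2) * vd := by
        simp only [w, map_sub]; ring
    _ = C ((s : ℚ) - t) * edgeForm k := by
        rw [hα, hδ, edgeForm, map_neg, map_mul]; ring

section Quotient

variable (k : ℤ)

local notation "π[" k "]" => Ideal.Quotient.mk (Ideal.span {edgeForm k})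

theorem mk_Pneg (q : ℕ) {a b : ℤ} (hb : b = a + q - 1) :
    π[k] (Pneg a b) = π[k] (C ((ascPochhammer ℚ q).eval ((a : ℚ) - k)) * vd ^ q) := by
  have hfactor : ∀ j : ℤ, π[k] (-va + C (j : ℚ) * vd) = π[k] (C ((j : ℚ) + -k) * vd) := by
    intro j
    rw [Ideal.Quotient.eq, Ideal.mem_span_singleton]
    exact ⟨1, by simp only [edgeForm, map_add, map_neg]; ring⟩
  have hcard : #(Icc a b) = q := by rw [Int.card_Icc]; omega
  rw [Pneg, map_prod, prod_congr rfl fun j _ => hfactor j, ← map_prod, prod_mul_distrib,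
    prod_const, ← map_prod, hcard, prod_Icc_intCast_add_eq_ascPochhammer q hb, ← sub_eq_add_neg]

theorem mk_Ppos (q : ℕ) {a b : ℤ} (hb : b = a + q - 1) :
    π[k] (Ppos a b) = π[k] (C ((ascPochhammer ℚ q).eval ((a : ℚ) + k)) * vd ^ q) := by
  have hfactor : ∀ j : ℤ, π[k] (va + C (j : ℚ) * vd) = π[k] (C ((j : ℚ) + k) * vd) := by
    intro j
    rw [Ideal.Quotient.eq, Ideal.mem_span_singleton]
    exact ⟨-1, by simp only [edgeForm, map_add]; ring⟩
  have hcard : #(Icc a b) = q := by rw [Int.card_Icc]; omega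
  rw [Ppos, map_prod, prod_congr rfl fun j _ => hfactor j, ← map_prod, prod_mul_distrib,
    prod_const, ← map_prod, hcard, prod_Icc_intCast_add_eq_ascPochhammer q hb]

theorem mk_C_B_mul_Pneg (q : ℕ) {a a' b : ℤ} (ha : 1 ≤ a) (hb : b = a' + q - 1) :
    π[k] (C (B (a + q - 1) q) * Pneg a' b) = π[k] (C (pochPair q a (a' - k)) * vd ^ q) := by
  rw [map_mul, mk_Pneg k q hb, ← map_mul, ← mul_assoc, ← map_mul,
    B_eq_ascPochhammer_div_factorial q ha, pochPair]
  push_cast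
  ring_nf

theorem mk_C_B_mul_Ppos (q : ℕ) {a a' b : ℤ} (ha : 1 ≤ a) (hb : b = a' + q - 1) :
    π[k] (C (B (a + q - 1) q) * Ppos a' b) = π[k] (C (pochPair q a (a' + k)) * vd ^ q) := by
  rw [map_mul, mk_Ppos k q hb, ← map_mul, ← mul_assoc, ← map_mul,
    B_eq_ascPochhammer_div_factorial q ha, pochPair]
  push_cast
  ring_nf

theorem mk_xiP {m t : ℤ} (q : ℕ) (ht₁ : -m ≤ t) (ht₂ : t ≤ m) :
    π[k] (xiP m q t) = π[k] (C (pochPair q ⌈((t : ℚ) - q + 1) / 2⌉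
      (⌈((t : ℚ) - q + 1) / 2⌉ - 1 - k)) * vd ^ q) := by
  have hA := two_mul_ceil_half_bounds (t - q + 1)
  have hA' := two_mul_ceil_half_bounds (-t - q)
  push_cast at hA hA'
  unfold xiP
  set A := ⌈((t : ℚ) - q + 1) / 2⌉
  set A' := ⌈(-(t : ℚ) - q) / 2⌉
  split_ifs
  · exact mk_C_B_mul_Pneg k q (by omega) (by omega)
  · rw [mk_C_B_mul_Ppos k q (by omega) (by omega),
      pochPair_reflect q (x' := A) (y' := A - 1 - k) (by omega) (by omega)]
  · simp [pochPair_eq_zero (by omega : 1 - (q : ℤ) ≤ A) (by omega)]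

theorem mk_xiM {m t : ℤ} (q : ℕ) (ht₁ : -m ≤ t) (ht₂ : t ≤ m) :
    π[k] (xiM m q t) = π[k] (C (pochPair q ⌈((t : ℚ) - q) / 2⌉
      (⌈((t : ℚ) - q) / 2⌉ - k)) * vd ^ q) := by
  have hA := two_mul_ceil_half_bounds (t - q)
  have hA' := two_mul_ceil_half_bounds (-t - q + 1)
  push_cast at hA hA'
  unfold xiM
  set A := ⌈((t : ℚ) - q) / 2⌉
  set A' := ⌈(-(t : ℚ) - q + 1) / 2⌉
  split_ifs
  · exact mk_C_B_mul_Pneg k q (by omega) (by omega)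
  · rw [mk_C_B_mul_Ppos k q (by omega) (by omega),
      pochPair_reflect q (x' := A) (y' := A - k) (by omega) (by omega)]
  · simp [pochPair_eq_zero (by omega : 1 - (q : ℤ) ≤ A) (by omega)]

theorem mk_xiP_eq_of_add_eq {m s t : ℤ} (q : ℕ) (hst : s + t = 2 * k + 1)
    (hs₁ : -m ≤ s) (hs₂ : s ≤ m) (ht₁ : -m ≤ t) (ht₂ : t ≤ m) :
    π[k] (xiP m q s) = π[k] (xiP m q t) := by
  have hs := two_mul_ceil_half_bounds (s - q + 1)
  have ht := two_mul_ceil_half_bounds (t - q + 1)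
  push_cast at hs ht
  rw [mk_xiP k q hs₁ hs₂, mk_xiP k q ht₁ ht₂]
  congr 3
  rw [pochPair_comm]
  exact pochPair_reflect q (by omega) (by omega)

theorem mk_xiM_eq_of_add_eq {m s t : ℤ} (q : ℕ) (hst : s + t = 2 * k + 1)
    (hs₁ : -m ≤ s) (hs₂ : s ≤ m) (ht₁ : -m ≤ t) (ht₂ : t ≤ m) :
    π[k] (xiM m q s) = π[k] (xiM m q t) := by
  have hs := two_mul_ceil_half_bounds (s - q)
  have ht := two_mul_ceil_half_bounds (t - q)
  push_cast at hs ht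
  rw [mk_xiM k q hs₁ hs₂, mk_xiM k q ht₁ ht₂]
  congr 3
  rw [pochPair_comm]
  exact pochPair_reflect q (by omega) (by omega)

end Quotient

theorem statement0_general (m : ℕ) (q : ℕ)
    (s t : ℤ) (hs1 : -(m : ℤ) ≤ s) (hs2 : s ≤ (m : ℤ))
    (ht1 : -(m : ℤ) ≤ t) (ht2 : t ≤ (m : ℤ))
    (hodd : Odd (|s| - |t|)) :
    (w s - w t) ∣ (xiP m q s - xiP m q t) ∧ (w s - w t) ∣ (xiM m q s - xiM m q t) := by
  obtain ⟨k, hk⟩ : Odd (s + t) := by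
    rwa [Int.odd_add, ← odd_abs, ← even_abs, ← Int.odd_sub]
  have hunit : IsUnit (C ((s : ℚ) - t) : Rpoly) :=
    (sub_ne_zero.mpr (Int.cast_injective.ne (by omega : s ≠ t))).isUnit.map C
  rw [w_sub_w_of_add_eq hk, hunit.mul_left_dvd, hunit.mul_left_dvd]
  exact ⟨Ideal.mem_span_singleton.mp <| Ideal.Quotient.eq.mp <|
      mk_xiP_eq_of_add_eq k q hk hs1 hs2 ht1 ht2,
    Ideal.mem_span_singleton.mp <| Ideal.Quotient.eq.mp <|
      mk_xiM_eq_of_add_eq k q hk hs1 hs2 ht1 ht2⟩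

/-- for `1 ≤ q ≤ m`, the Knutson–Tao classes `ξ⁺_q` and `ξ⁻_q` satisfy
the GKM congruence relations of the moment graph `G_m`, i.e. belong to `H_m`. -/
theorem statement0 (m : ℕ) (hm : 1 ≤ m) (q : ℕ) (hq1 : 1 ≤ q) (hq2 : q ≤ m)
    (s t : ℤ) (hs1 : -(m : ℤ) ≤ s) (hs2 : s ≤ (m : ℤ))
    (ht1 : -(m : ℤ) ≤ t) (ht2 : t ≤ (m : ℤ))
    (hlt : |t| < |s|) (hodd : Odd (|s| - |t|)) :
    (w s - w t) ∣ (xiP m q s - xiP m q t) ∧ (w s - w t) ∣ (xiM m q s - xiM m q t) :=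
  statement0_general m q s t hs1 hs2 ht1 ht2 hodd
end
end

section
/- Assume m ≥ 2. Then for every t ∈ V_m one has ξ⁺_1(t)·ξ⁻_1(t) = ξ⁺_2(t) + ξ⁻_2(t); that is, the pointwise product of the two degree-two Knutson–Tao classes equals the sum of the two degree-four Knutson–Tao classes. -/
noncomputable section

open Finset MvPolynomial

/-! The substitution `α ↦ −α − δ`, `δ ↦ δ` is an involution of `ℚ[α,δ]` sending `P⁻(a,b)` to
`P⁺(a+1,b+1)`; together with `t ↦ −t` it exchanges `ξ⁺_q` and `ξ⁻_q`, so it suffices to prove the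
identity for `t ≥ 0`. There the range conditions in the definitions can be dropped, because the
binomial coefficient vanishes outside them. Writing `x_k = −α + kδ`, the identity becomes
`s² x_{s−1} x_s = (C(s+1,2) + C(s,2)) x_{s−1} x_s` for `t = 2s` and
`s(s+1) x_s² = C(s+1,2) (x_{s−1} + x_{s+1}) x_s` for `t = 2s+1`. -/

def reflect : Rpoly →ₐ[ℚ] Rpoly := aeval ![-va - vd, vd]

lemma reflect_C (r : ℚ) : reflect (C r) = C r := by
  rw [reflect, aeval_C, algebraMap_eq]

lemma reflect_va : reflect va = -va - vd := by
  simp [reflect, va]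

lemma reflect_vd : reflect vd = vd := by
  simp [reflect, vd]

lemma reflect_reflect (p : Rpoly) : reflect (reflect p) = p := by
  have h : reflect.comp reflect = AlgHom.id ℚ Rpoly := by
    refine algHom_ext fun i => ?_
    fin_cases i <;> simp [reflect, va, vd]
  exact AlgHom.congr_fun h p

lemma reflect_Pneg (a b : ℤ) : reflect (Pneg a b) = Ppos (a + 1) (b + 1) := by
  rw [Pneg, Ppos, map_prod, ← map_add_right_Icc, prod_map]
  refine prod_congr rfl fun k _ => ?_
  simp only [map_add, map_neg, map_mul, reflect_C, reflect_va, reflect_vd,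
    addRightEmbedding_apply, Int.cast_add, Int.cast_one, map_one]
  ring

lemma reflect_Ppos (a b : ℤ) : reflect (Ppos a b) = Pneg (a - 1) (b - 1) := by
  rw [← reflect_reflect (Pneg (a - 1) (b - 1)), reflect_Pneg, sub_add_cancel, sub_add_cancel]

lemma reflect_xiP (m : ℤ) (q : ℕ) (t : ℤ) : reflect (xiP m q t) = xiM m q (-t) := by
  unfold xiP xiM
  simp only [Int.cast_neg, neg_neg]
  split_ifs <;> try omega
  · rw [map_mul, reflect_C, reflect_Pneg]
    congr 2 <;> ring
  · rw [map_mul, reflect_C, reflect_Ppos]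
    congr 2
    ring
  · exact map_zero reflect

lemma reflect_xiM (m : ℤ) (q : ℕ) (t : ℤ) : reflect (xiM m q t) = xiP m q (-t) := by
  rw [← reflect_reflect (xiP m q (-t)), reflect_xiP, neg_neg]

lemma B_eq_zero_of_lt {n : ℤ} {q : ℕ} (hq : q ≠ 0) (h : n < q) : B n q = 0 := by
  rw [B, Nat.cast_eq_zero]
  exact Nat.choose_eq_zero_of_lt (by omega)

lemma B_one {n : ℤ} (h : 0 ≤ n) : B n 1 = n := by
  rw [B, Nat.choose_one_right, ← Int.cast_natCast, Int.toNat_of_nonneg h]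

lemma B_two {n : ℤ} (h : 0 ≤ n) : B n 2 = n * (n - 1) / 2 := by
  rw [B, Nat.cast_choose_two, ← Int.cast_natCast, Int.toNat_of_nonneg h]

lemma B_add_one_two_add_B_two {n : ℤ} (h : 0 ≤ n) : B (n + 1) 2 + B n 2 = B n 1 * B n 1 := by
  rw [B_two (by omega), B_two h, B_one h]
  push_cast
  ring

lemma B_add_one_two_mul_two {n : ℤ} (h : 0 ≤ n) : B (n + 1) 2 * 2 = B (n + 1) 1 * B n 1 := by
  rw [B_two (by omega), B_one (by omega), B_one h]
  push_cast
  ring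

lemma ceil_div_two_eq {x c : ℤ} (h₁ : x ≤ 2 * c) (h₂ : 2 * c ≤ x + 1) :
    ⌈(x : ℚ) / 2⌉ = c := by
  have h₁' : (x : ℚ) ≤ 2 * c := by exact_mod_cast h₁
  have h₂' : 2 * (c : ℚ) ≤ x + 1 := by exact_mod_cast h₂
  rw [Int.ceil_eq_iff]
  constructor <;> linarith

-- `hc₁`, `hc₂` say that `c = ⌈(t - q + 1) / 2⌉`.
lemma xiP_of_nonneg {m t c : ℤ} {q : ℕ} (hq : q ≠ 0) (ht : 0 ≤ t) (htm : t ≤ m)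
    (hc₁ : t - q + 1 ≤ 2 * c) (hc₂ : 2 * c ≤ t - q + 2) :
    xiP m q t = C (B (c + q - 1) q) * Pneg (c - 1) (c + q - 2) := by
  have hceil : ⌈((t : ℚ) - q + 1) / 2⌉ = c := by
    exact_mod_cast ceil_div_two_eq (x := t - q + 1) hc₁ (by omega)
  rw [xiP, hceil]
  split_ifs <;> try omega
  · rfl
  · rw [B_eq_zero_of_lt hq (by omega), map_zero, zero_mul]

lemma xiM_of_nonneg {m t c : ℤ} {q : ℕ} (hq : q ≠ 0) (ht : 0 ≤ t) (htm : t ≤ m)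
    (hc₁ : t - q ≤ 2 * c) (hc₂ : 2 * c ≤ t - q + 1) :
    xiM m q t = C (B (c + q - 1) q) * Pneg c (c + q - 1) := by
  have hceil : ⌈((t : ℚ) - q) / 2⌉ = c := by
    exact_mod_cast ceil_div_two_eq (x := t - q) hc₁ hc₂
  rw [xiM, hceil]
  split_ifs <;> try omega
  · rfl
  · rw [B_eq_zero_of_lt hq (by omega), map_zero, zero_mul]

def negFactor (k : ℤ) : Rpoly := -va + C (k : ℚ) * vd

lemma Pneg_self (a : ℤ) : Pneg a a = negFactor a := by
  rw [Pneg, Icc_self, prod_singleton, negFactor]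

lemma Pneg_self_add_one (a : ℤ) : Pneg a (a + 1) = negFactor a * negFactor (a + 1) := by
  rw [Pneg, show Icc a (a + 1) = {a, a + 1} by ext; simp; omega, prod_pair (by omega)]
  simp only [negFactor, Int.cast_add, Int.cast_one]

lemma Pneg_sub_one_self (a : ℤ) : Pneg (a - 1) a = negFactor (a - 1) * negFactor a := by
  simpa using Pneg_self_add_one (a - 1)

lemma negFactor_sub_one_add_negFactor_add_one (k : ℤ) :
    negFactor (k - 1) + negFactor (k + 1) = 2 * negFactor k := by
  simp only [negFactor, Int.cast_sub, Int.cast_add, Int.cast_one, map_sub, map_add, map_one]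
  ring

lemma xiP_one_mul_xiM_one_of_nonneg {m t : ℤ} (ht : 0 ≤ t) (htm : t ≤ m) :
    xiP m 1 t * xiM m 1 t = xiP m 2 t + xiM m 2 t := by
  obtain ⟨s, rfl | rfl⟩ := Int.even_or_odd' t
  · rw [xiP_of_nonneg one_ne_zero ht htm (c := s) (by omega) (by omega),
      xiM_of_nonneg one_ne_zero ht htm (c := s) (by omega) (by omega),
      xiP_of_nonneg two_ne_zero ht htm (c := s) (by omega) (by omega),
      xiM_of_nonneg two_ne_zero ht htm (c := s - 1) (by omega) (by omega)]
    simp only [Nat.cast_one, Nat.cast_ofNat, add_sub_cancel_right]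
    rw [show s + 1 - 2 = s - 1 by ring, show s + 2 - 1 = s + 1 by ring,
      show s - 1 + 2 - 1 = s by ring, Pneg_self, Pneg_self, Pneg_sub_one_self, ← add_mul,
      ← map_add, B_add_one_two_add_B_two (by omega), map_mul]
    ring
  · rw [xiP_of_nonneg one_ne_zero ht htm (c := s + 1) (by omega) (by omega),
      xiM_of_nonneg one_ne_zero ht htm (c := s) (by omega) (by omega),
      xiP_of_nonneg two_ne_zero ht htm (c := s) (by omega) (by omega),
      xiM_of_nonneg two_ne_zero ht htm (c := s) (by omega) (by omega)]
    simp only [Nat.cast_one, Nat.cast_ofNat, add_sub_cancel_right]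
    rw [show s + 1 + 1 - 2 = s by ring, show s + 2 - 1 = s + 1 by ring, Pneg_self,
      Pneg_sub_one_self, Pneg_self_add_one]
    have hC : (C (B (s + 1) 2) : Rpoly) * 2 = C (B (s + 1) 1) * C (B s 1) := by
      rw [← map_ofNat C 2, ← map_mul, ← map_mul, B_add_one_two_mul_two (by omega)]
    linear_combination (-negFactor s ^ 2) * hC -
      C (B (s + 1) 2) * negFactor s * negFactor_sub_one_add_negFactor_add_one s

theorem statement1_general (m : ℕ) (t : ℤ)
    (ht1 : -(m : ℤ) ≤ t) (ht2 : t ≤ (m : ℤ)) :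
    xiP m 1 t * xiM m 1 t = xiP m 2 t + xiM m 2 t := by
  rcases le_total 0 t with ht | ht
  · exact xiP_one_mul_xiM_one_of_nonneg ht ht2
  · have h := congrArg reflect
      (xiP_one_mul_xiM_one_of_nonneg (m := m) (neg_nonneg.2 ht) (by omega))
    simp only [map_mul, map_add, reflect_xiP, reflect_xiM, neg_neg] at h
    rw [mul_comm, add_comm, h]

/-- `ξ⁺_1 · ξ⁻_1 = ξ⁺_2 + ξ⁻_2` pointwise on `V_m`, for `m ≥ 2`. -/
theorem statement1 (m : ℕ) (hm : 2 ≤ m) (t : ℤ)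
    (ht1 : -(m : ℤ) ≤ t) (ht2 : t ≤ (m : ℤ)) :
    xiP m 1 t * xiM m 1 t = xiP m 2 t + xiM m 2 t :=
  statement1_general m t ht1 ht2
end
end

section
/- For every integer q with 0 ≤ q ≤ m and every t ∈ V_m, the following four identities hold in R: ξ⁺_m(t)·(ξ⁺_q(t) − ξ⁺_q(m)) = 0, ξ⁺_m(t)·(ξ⁻_q(t) − ξ⁻_q(m)) = 0, ξ⁻_m(t)·(ξ⁺_q(t) − ξ⁺_q(−m)) = 0, and ξ⁻_m(t)·(ξ⁻_q(t) − ξ⁻_q(−m)) = 0. (Here ξ⁺_m and ξ⁻_m are the classes ξ(2m,0) and ξ(0,2m) of the paper, and the constants subtracted are their values at the extreme vertices m and −m.) -/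
noncomputable section

open Finset MvPolynomial

theorem mul_sub_apply_eq_zero_of_eq_zero_of_ne {α R : Type*} [NonUnitalNonAssocRing R]
    {f : α → R} {s : α} (hf : ∀ t, t ≠ s → f t = 0) (g : α → R) (t : α) :
    f t * (g t - g s) = 0 := by
  by_cases h : t = s
  · rw [h, sub_self, mul_zero]
  · rw [hf t h, zero_mul]

theorem xiP_self_eq_zero_of_ne (m : ℕ) {t : ℤ} (h : t ≠ m) : xiP m m t = 0 := by
  rw [xiP, if_neg (by omega), if_neg (by omega)]

theorem xiM_self_eq_zero_of_ne (m : ℕ) {t : ℤ} (h : t ≠ -(m : ℤ)) : xiM m m t = 0 := by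
  rw [xiM, if_neg (by omega), if_neg (by omega)]

theorem statement2_general (m : ℕ) (q : ℕ) (t : ℤ) :
    xiP m m t * (xiP m q t - xiP m q (m : ℤ)) = 0 ∧
    xiP m m t * (xiM m q t - xiM m q (m : ℤ)) = 0 ∧
    xiM m m t * (xiP m q t - xiP m q (-(m : ℤ))) = 0 ∧
    xiM m m t * (xiM m q t - xiM m q (-(m : ℤ))) = 0 :=
  have hP : ∀ s : ℤ, s ≠ m → xiP m m s = 0 := fun _ => xiP_self_eq_zero_of_ne m
  have hM : ∀ s : ℤ, s ≠ -(m : ℤ) → xiM m m s = 0 := fun _ => xiM_self_eq_zero_of_ne m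
  ⟨mul_sub_apply_eq_zero_of_eq_zero_of_ne hP _ t, mul_sub_apply_eq_zero_of_eq_zero_of_ne hP _ t,
    mul_sub_apply_eq_zero_of_eq_zero_of_ne hM _ t, mul_sub_apply_eq_zero_of_eq_zero_of_ne hM _ t⟩

/-- the top classes `ξ⁺_m = ξ(2m,0)` and `ξ⁻_m = ξ(0,2m)` kill
`ξ_q − (value at the extreme vertex)` for every `0 ≤ q ≤ m`. -/
theorem statement2 (m : ℕ) (hm : 1 ≤ m) (q : ℕ) (hq : q ≤ m)
    (t : ℤ) (ht1 : -(m : ℤ) ≤ t) (ht2 : t ≤ (m : ℤ)) :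
    xiP m m t * (xiP m q t - xiP m q (m : ℤ)) = 0 ∧
    xiP m m t * (xiM m q t - xiM m q (m : ℤ)) = 0 ∧
    xiM m m t * (xiP m q t - xiP m q (-(m : ℤ))) = 0 ∧
    xiM m m t * (xiM m q t - xiM m q (-(m : ℤ))) = 0 :=
  statement2_general m q t
end
end

section
/- Let q be an odd integer with 0 < q < m. Then for every t ∈ V_m, ξ⁺_q(t)·(ξ⁺_1(t) − ξ⁺_1(q)) = (q+1)·ξ⁻_{q+1}(t) in R, where ξ⁺_1(q) ∈ R is the value of ξ⁺_1 at the vertex q. -/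
noncomputable section

open Finset MvPolynomial

/-!
For `q ≤ t` put `n = ⌊(t − q)/2⌋`. Then `ξ⁺_q(t)` and `ξ⁻_{q+1}(t)` are the binomial multiples
`C(n+q, q)·P⁻(n, n+q−1)` and `C(n+q, q+1)·P⁻(n, n+q)`, and since `q = 2j+1` is odd the parameter
of `ξ⁺_1(t)` is exactly `n + j`, so `ξ⁺_1(t) − ξ⁺_1(q) = n·(−α + (n+q)δ)`: this is the top factor
missing from `P⁻(n, n+q−1)`, and `n·C(n+q, q) = (q+1)·C(n+q, q+1)` matches the coefficients.
For `t ≤ −(q+1)` and `n = ⌊(−t − q − 1)/2⌋` the difference is `(n+q+1)·(α + (n+1)δ)`, the bottom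
factor of `P⁺(n+1, n+q+1)`, and `(n+q+1)·C(n+q, q) = (q+1)·C(n+q+1, q+1)`. In between, both sides
vanish.
-/

lemma ceil_intCast_div_two (x : ℤ) : ⌈(x : ℚ) / 2⌉ = -(-x / 2) := by
  exact_mod_cast Rat.ceil_intCast_div_natCast x 2

lemma B_natCast (n q : ℕ) : B n q = n.choose q := by
  simp [B]

lemma Pneg_add_one {a b : ℤ} (h : a ≤ b + 1) :
    Pneg a (b + 1) = Pneg a b * (-va + C ((b + 1 : ℤ) : ℚ) * vd) := by
  rw [Pneg, ← insert_Icc_right_eq_Icc_add_one h, prod_insert (by simp), mul_comm, Pneg]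

lemma Ppos_eq_mul_Ppos_add_one {a b : ℤ} (h : a ≤ b) :
    Ppos a b = (va + C (a : ℚ) * vd) * Ppos (a + 1) b := by
  rw [Ppos, ← insert_Icc_add_one_left_eq_Icc h, prod_insert (by simp), Ppos]

section

variable {m t : ℤ} {q n : ℕ}

lemma xiP_of_le (h₁ : (q : ℤ) ≤ t) (h₂ : t ≤ m) (hn : (t - q) / 2 = n) :
    xiP m q t = C ((n + q).choose q : ℚ) * Pneg n (n + q - 1) := by
  have hc : ⌈((t : ℚ) - q + 1) / 2⌉ = n + 1 := by
    rw [show (t : ℚ) - q + 1 = ((t - q + 1 : ℤ) : ℚ) by push_cast; ring, ceil_intCast_div_two]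
    omega
  rw [xiP, if_pos ⟨h₁, h₂⟩, hc, show (n : ℤ) + 1 + q - 1 = ((n + q : ℕ) : ℤ) by push_cast; ring,
    B_natCast]
  congr 2 <;> ring

lemma xiP_of_le_neg (h₁ : -m ≤ t) (h₂ : t ≤ -(q + 1)) (hn : (-t - q - 1) / 2 = n) :
    xiP m q t = C ((n + q).choose q : ℚ) * Ppos (n + 2) (n + q + 1) := by
  have hc : ⌈(-(t : ℚ) - q) / 2⌉ = n + 1 := by
    rw [show -(t : ℚ) - q = ((-t - q : ℤ) : ℚ) by push_cast; ring, ceil_intCast_div_two]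
    omega
  rw [xiP, if_neg (by omega), if_pos ⟨h₁, h₂⟩, hc,
    show (n : ℤ) + 1 + q - 1 = ((n + q : ℕ) : ℤ) by push_cast; ring, B_natCast]
  congr 2; ring

lemma xiM_succ_of_le (h₁ : (q : ℤ) ≤ t) (h₂ : t ≤ m) (hn : (t - q) / 2 = n) :
    xiM m (q + 1) t = C ((n + q).choose (q + 1) : ℚ) * Pneg n (n + q) := by
  by_cases h₃ : (q : ℤ) + 2 ≤ t
  · have hc : ⌈((t : ℚ) - (q + 1 : ℕ)) / 2⌉ = n := by
      rw [show (t : ℚ) - (q + 1 : ℕ) = ((t - q - 1 : ℤ) : ℚ) by push_cast; ring,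
        ceil_intCast_div_two]
      omega
    rw [xiM, if_pos ⟨by push_cast; omega, h₂⟩, hc,
      show (n : ℤ) + (q + 1 : ℕ) - 1 = ((n + q : ℕ) : ℤ) by push_cast; ring, B_natCast]
    congr 2
  · have hn₀ : n = 0 := by omega
    rw [xiM, if_neg (by push_cast; omega), if_neg (by push_cast; omega), hn₀, zero_add,
      Nat.choose_succ_self, Nat.cast_zero, map_zero, zero_mul]

lemma xiM_succ_of_le_neg (h₁ : -m ≤ t) (h₂ : t ≤ -(q + 1)) (hn : (-t - q - 1) / 2 = n) :
    xiM m (q + 1) t = C ((n + q + 1).choose (q + 1) : ℚ) * Ppos (n + 1) (n + q + 1) := by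
  have hc : ⌈(-(t : ℚ) - (q + 1 : ℕ) + 1) / 2⌉ = n + 1 := by
    rw [show -(t : ℚ) - (q + 1 : ℕ) + 1 = ((-t - q : ℤ) : ℚ) by push_cast; ring,
      ceil_intCast_div_two]
    omega
  rw [xiM, if_neg (by omega), if_pos ⟨h₁, by push_cast; omega⟩, hc,
    show (n : ℤ) + 1 + (q + 1 : ℕ) - 1 = ((n + q + 1 : ℕ) : ℤ) by push_cast; ring, B_natCast]
  congr 2

lemma xiP_eq_zero (h₁ : -((q : ℤ) + 1) < t) (h₂ : t < q) : xiP m q t = 0 := by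
  rw [xiP, if_neg (by omega), if_neg (by omega)]

lemma xiM_succ_eq_zero (h₁ : -((q : ℤ) + 1) < t) (h₂ : t < q) : xiM m (q + 1) t = 0 := by
  rw [xiM, if_neg (by push_cast; omega), if_neg (by push_cast; omega)]

lemma xiP_one_of_pos (h₁ : 1 ≤ t) (h₂ : t ≤ m) (hn : (t - 1) / 2 = n) :
    xiP m 1 t = C ((n : ℚ) + 1) * (-va + C (n : ℚ) * vd) := by
  rw [xiP_of_le (n := n) (by exact_mod_cast h₁) h₂ (by exact_mod_cast hn), Nat.choose_one_right,
    show (n : ℤ) + (1 : ℕ) - 1 = n by push_cast; ring, Pneg, Icc_self, prod_singleton]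
  push_cast; rfl

lemma xiP_one_of_neg (h₁ : -m ≤ t) (h₂ : t ≤ -2) (hn : (-t - 2) / 2 = n) :
    xiP m 1 t = C ((n : ℚ) + 1) * (va + C ((n : ℚ) + 2) * vd) := by
  rw [xiP_of_le_neg (n := n) h₁ (by push_cast; omega) (by push_cast; omega), Nat.choose_one_right,
    show (n : ℤ) + (1 : ℕ) + 1 = n + 2 by push_cast; ring, Ppos, Icc_self, prod_singleton]
  push_cast; rfl

lemma xiP_one_sub_of_le (hq : Odd q) (hqm : (q : ℤ) ≤ m) (h₁ : (q : ℤ) ≤ t) (h₂ : t ≤ m)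
    (hn : (t - q) / 2 = n) :
    xiP m 1 t - xiP m 1 q = C (n : ℚ) * (-va + C ((n : ℚ) + q) * vd) := by
  obtain ⟨j, rfl⟩ := hq
  rw [xiP_one_of_pos (n := n + j) (by omega) h₂ (by push_cast at *; omega),
    xiP_one_of_pos (n := j) (by omega) hqm (by push_cast; omega)]
  simp only [Nat.cast_add, Nat.cast_mul, Nat.cast_one, Nat.cast_ofNat, map_add, map_mul,
    map_one, map_ofNat]
  ring

lemma xiP_one_sub_of_le_neg (hq : Odd q) (hqm : (q : ℤ) ≤ m) (h₁ : -m ≤ t) (h₂ : t ≤ -(q + 1))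
    (hn : (-t - q - 1) / 2 = n) :
    xiP m 1 t - xiP m 1 q = C ((n : ℚ) + q + 1) * (va + C ((n : ℚ) + 1) * vd) := by
  obtain ⟨j, rfl⟩ := hq
  rw [xiP_one_of_neg (n := n + j) h₁ (by push_cast at *; omega) (by push_cast at *; omega),
    xiP_one_of_pos (n := j) (by omega) hqm (by push_cast; omega)]
  simp only [Nat.cast_add, Nat.cast_mul, Nat.cast_one, Nat.cast_ofNat, map_add, map_mul,
    map_one, map_ofNat]
  ring

lemma choose_mul_eq_succ_mul_choose_succ (n q : ℕ) :
    (n + q).choose q * n = (q + 1) * (n + q).choose (q + 1) := by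
  rw [mul_comm (q + 1), Nat.choose_succ_right_eq, Nat.add_sub_cancel]

lemma xiP_mul_xiP_one_sub_of_le (hq : Odd q) (hqm : (q : ℤ) ≤ m) (h₁ : (q : ℤ) ≤ t)
    (h₂ : t ≤ m) :
    xiP m q t * (xiP m 1 t - xiP m 1 q) = ((q + 1 : ℕ) : Rpoly) * xiM m (q + 1) t := by
  obtain ⟨n, hn⟩ : ∃ n : ℕ, (t - q) / 2 = n := ⟨_, (Int.toNat_of_nonneg (by omega)).symm⟩
  have hP : Pneg n (n + q) = Pneg n (n + q - 1) * (-va + C ((n : ℚ) + q) * vd) := by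
    simpa using Pneg_add_one (a := n) (b := n + q - 1) (by omega)
  have hc : ((n + q).choose q * n : Rpoly) = (q + 1) * (n + q).choose (q + 1) := by
    exact_mod_cast choose_mul_eq_succ_mul_choose_succ n q
  rw [xiP_of_le h₁ h₂ hn, xiP_one_sub_of_le hq hqm h₁ h₂ hn, xiM_succ_of_le h₁ h₂ hn, hP]
  simp only [map_add, map_natCast, Nat.cast_add, Nat.cast_one]
  linear_combination (Pneg n (n + q - 1) * (-va + (n + q) * vd)) * hc

lemma xiP_mul_xiP_one_sub_of_le_neg (hq : Odd q) (hqm : (q : ℤ) ≤ m) (h₁ : -m ≤ t)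
    (h₂ : t ≤ -(q + 1)) :
    xiP m q t * (xiP m 1 t - xiP m 1 q) = ((q + 1 : ℕ) : Rpoly) * xiM m (q + 1) t := by
  obtain ⟨n, hn⟩ : ∃ n : ℕ, (-t - q - 1) / 2 = n := ⟨_, (Int.toNat_of_nonneg (by omega)).symm⟩
  have hP : Ppos (n + 1) (n + q + 1) = (va + C ((n : ℚ) + 1) * vd) * Ppos (n + 2) (n + q + 1) := by
    rw [Ppos_eq_mul_Ppos_add_one (by omega)]; push_cast; ring_nf
  have hc : ((n + q + 1) * (n + q).choose q : Rpoly) = (n + q + 1).choose (q + 1) * (q + 1) := by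
    exact_mod_cast Nat.add_one_mul_choose_eq (n + q) q
  rw [xiP_of_le_neg h₁ h₂ hn, xiP_one_sub_of_le_neg hq hqm h₁ h₂ hn, xiM_succ_of_le_neg h₁ h₂ hn,
    hP]
  simp only [map_add, map_one, map_natCast, Nat.cast_add, Nat.cast_one]
  linear_combination (Ppos (n + 2) (n + q + 1) * (va + (n + 1) * vd)) * hc

end

theorem statement3_general (m : ℕ) (q : ℕ) (hodd : Odd q)
    (hqm : q < m)
    (t : ℤ) (ht1 : -(m : ℤ) ≤ t) (ht2 : t ≤ (m : ℤ)) :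
    xiP m q t * (xiP m 1 t - xiP m 1 (q : ℤ)) = ((q + 1 : ℕ) : Rpoly) * xiM m (q + 1) t := by
  have hqm_int : (q : ℤ) ≤ m := by omega
  rcases le_or_gt (q : ℤ) t with hpos | hlt
  · exact xiP_mul_xiP_one_sub_of_le hodd hqm_int hpos ht2
  rcases le_or_gt t (-(q + 1)) with hneg | hmid
  · exact xiP_mul_xiP_one_sub_of_le_neg hodd hqm_int ht1 hneg
  · rw [xiP_eq_zero hmid hlt, xiM_succ_eq_zero hmid hlt, zero_mul, mul_zero]

/-- for odd `0 < q < m`,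
`ξ⁺_q · (ξ⁺_1 − ξ⁺_1(q)) = (q+1) · ξ⁻_{q+1}` pointwise on `V_m`. -/
theorem statement3 (m : ℕ) (hm : 1 ≤ m) (q : ℕ) (hodd : Odd q)
    (hq0 : 0 < q) (hqm : q < m)
    (t : ℤ) (ht1 : -(m : ℤ) ≤ t) (ht2 : t ≤ (m : ℤ)) :
    xiP m q t * (xiP m 1 t - xiP m 1 (q : ℤ)) = ((q + 1 : ℕ) : Rpoly) * xiM m (q + 1) t :=
  statement3_general m q hodd hqm t ht1 ht2
end
end

section
/- For every t ∈ V_m, 2·ξ⁺_1(t)·ξ⁻_1(t) = ξ⁺_1(t)·(ξ⁺_1(t) − ξ⁺_1(1)) + ξ⁻_1(t)·(ξ⁻_1(t) − ξ⁻_1(−1)) in R, where ξ⁺_1(1) and ξ⁻_1(−1) are the values of ξ⁺_1 at vertex 1 and of ξ⁻_1 at vertex −1. -/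
noncomputable section

open Finset MvPolynomial

/-!
For `q = 1` the two branches (`t > 0` and `t < 0`) of each class are one and the same
polynomial in an integer parameter: `ξ⁺_1(t) = n (−α + (n−1) δ)` with `n = ⌈t/2⌉` and
`ξ⁻_1(t) = n (−α + n δ)` with `n = ⌊t/2⌋`, the negative branches `c (α + (c+1) δ)` and
`c (α + c δ)` being these with `c = −n`. So `ξ⁺_1(1) = −α`, `ξ⁻_1(−1) = α + δ`, and the identity,
which reads `(ξ⁺_1 − ξ⁻_1)² + α ξ⁺_1 − (α + δ) ξ⁻_1 = 0`, becomes a polynomial identity in `n`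
for each parity of `t`.
-/

def xiPOne (n : ℤ) : Rpoly := C (n : ℚ) * (-va + C ((n : ℚ) - 1) * vd)

def xiMOne (n : ℤ) : Rpoly := C (n : ℚ) * (-va + C (n : ℚ) * vd)

lemma ceil_intCast_div_two_s14 (t : ℤ) : ⌈(t : ℚ) / 2⌉ = (t + 1) / 2 := by
  have := Rat.ceil_intCast_div_natCast t 2
  push_cast at this
  omega

lemma ceil_neg_intCast_div_two (t : ℤ) : ⌈-(t : ℚ) / 2⌉ = -(t / 2) := by
  rw [neg_div, Int.ceil_neg]
  exact_mod_cast congrArg Neg.neg (Rat.floor_intCast_div_natCast t 2)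

lemma xiP_one_apply {m t : ℤ} (ht1 : -m ≤ t) (ht2 : t ≤ m) :
    xiP m 1 t = xiPOne ((t + 1) / 2) := by
  unfold xiP
  simp only [Nat.cast_one, sub_add_cancel, add_sub_cancel_right]
  split_ifs
  · rw [ceil_intCast_div_two_s14, B_one (by omega),
      show (t + 1) / 2 + 1 - 2 = (t + 1) / 2 - 1 by ring]
    simp [Pneg, xiPOne]
  · rw [show (-(t : ℚ) - 1) / 2 = -((t + 1 : ℤ) : ℚ) / 2 by push_cast; ring,
      ceil_neg_intCast_div_two, B_one (by omega)]
    simp only [Ppos, xiPOne, Icc_self, prod_singleton, map_intCast, Int.cast_neg, Int.cast_add,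
      Int.cast_one, C_neg, C_sub, C_1]
    ring
  · rw [show (t + 1) / 2 = 0 by omega]
    simp [xiPOne]

lemma xiM_one_apply {m t : ℤ} (ht1 : -m ≤ t) (ht2 : t ≤ m) :
    xiM m 1 t = xiMOne (t / 2) := by
  unfold xiM
  simp only [Nat.cast_one, sub_add_cancel, add_sub_cancel_right]
  split_ifs
  · rw [show (t : ℚ) - 1 = ((t - 1 : ℤ) : ℚ) by push_cast; rfl, ceil_intCast_div_two_s14,
      sub_add_cancel, B_one (by omega)]
    simp [Pneg, xiMOne]
  · rw [ceil_neg_intCast_div_two, B_one (by omega)]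
    simp only [Ppos, xiMOne, Icc_self, prod_singleton, map_intCast, Int.cast_neg, C_neg]
    ring
  · rw [show t / 2 = 0 by omega]
    simp [xiMOne]

lemma two_mul_xiPOne_mul_xiMOne (n : ℤ) :
    2 * (xiPOne n * xiMOne n) =
      xiPOne n * (xiPOne n - xiPOne 1) + xiMOne n * (xiMOne n - xiMOne (-1)) := by
  simp only [xiPOne, xiMOne, Int.cast_one, Int.cast_neg, sub_self, map_zero, map_one, map_neg,
    map_sub]
  ring

lemma two_mul_xiPOne_add_one_mul_xiMOne (n : ℤ) :
    2 * (xiPOne (n + 1) * xiMOne n) =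
      xiPOne (n + 1) * (xiPOne (n + 1) - xiPOne 1) + xiMOne n * (xiMOne n - xiMOne (-1)) := by
  simp only [xiPOne, xiMOne, Int.cast_one, Int.cast_neg, Int.cast_add, sub_self, map_zero,
    map_one, map_neg, map_add, map_sub]
  ring

/-- `2·ξ⁺_1·ξ⁻_1 = ξ⁺_1·(ξ⁺_1 − ξ⁺_1(1)) + ξ⁻_1·(ξ⁻_1 − ξ⁻_1(−1))`
pointwise on `V_m`. -/
theorem statement14 (m : ℕ) (hm : 1 ≤ m) (t : ℤ)
    (ht1 : -(m : ℤ) ≤ t) (ht2 : t ≤ (m : ℤ)) :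
    2 * (xiP m 1 t * xiM m 1 t) =
      xiP m 1 t * (xiP m 1 t - xiP m 1 1) + xiM m 1 t * (xiM m 1 t - xiM m 1 (-1)) := by
  have hP1 : xiP m 1 1 = xiPOne 1 := xiP_one_apply (by omega) (by omega)
  have hM1 : xiM m 1 (-1) = xiMOne (-1) := xiM_one_apply (by omega) (by omega)
  rw [xiP_one_apply ht1 ht2, xiM_one_apply ht1 ht2, hP1, hM1]
  rcases Int.even_or_odd' t with ⟨n, rfl | rfl⟩
  · rw [show (2 * n + 1) / 2 = n by omega, show 2 * n / 2 = n by omega]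
    exact two_mul_xiPOne_mul_xiMOne n
  · rw [show (2 * n + 1 + 1) / 2 = n + 1 by omega, show (2 * n + 1) / 2 = n by omega]
    exact two_mul_xiPOne_add_one_mul_xiMOne n
end
end
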